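/- arXiv:cs/0701152 — 2 statements merged into one kernel-verified Lean document; each statement's English description precedes it below -/
import Mathlib

section
/- Let A be nonnegative with zero diagonal, B = diag(μ)A primitive, η > 0 entrywise, p̄_Ω > 0, Ω ⊆ {1,…,n} nonempty, C = ψ(B, η/p̄_Ω, Ω) primitive, and let γ* = 1/λ*(C). Then for every γ with 0 < γ ≤ γ*, the unique solution p of (I − γB)p = γη satisfies p ≥ 0 and Σ_{i∈Ω} p_i ≤ p̄_Ω; moreover at γ = γ* one has Σ_{i∈Ω} p_i = p̄_Ω. -/
open Matrix BigOperators Polynomial Filter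

/-- Spectral radius of a real square matrix: the largest modulus of a complex eigenvalue
(root of the characteristic polynomial over ℂ). -/
noncomputable def specRad {m : Type*} [Fintype m] [DecidableEq m] (A : Matrix m m ℝ) : ℝ :=
  sSup ((fun z : ℂ => ‖z‖) '' {z : ℂ | ((A.map Complex.ofReal).charpoly).IsRoot z})

/-- A nonnegative matrix is primitive if some power is entrywise positive. -/
def Primitive {m : Type*} [Fintype m] [DecidableEq m] (A : Matrix m m ℝ) : Prop :=
  ∃ k : ℕ, ∀ i j, 0 < (A ^ k) i j

/-- ψ(X, y, S): the matrix X with the vector y added to each column indexed by S. -/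
def psi {m : Type*} [DecidableEq m] {R : Type*} [Add R]
    (X : Matrix m m R) (y : m → R) (S : Finset m) : Matrix m m R :=
  fun i j => if j ∈ S then X i j + y i else X i j

namespace SpecAux

open scoped ENNReal NNReal Topology

attribute [local instance] Matrix.linftyOpNormedRing Matrix.linftyOpNormedAlgebra

variable {n : ℕ}

noncomputable local instance : CompleteSpace (Matrix (Fin n) (Fin n) ℂ) :=
  FiniteDimensional.complete ℂ (Matrix (Fin n) (Fin n) ℂ)

lemma eval_charpoly' (M : Matrix (Fin n) (Fin n) ℂ) (z : ℂ) :
    M.charpoly.eval z = (z • (1 : Matrix (Fin n) (Fin n) ℂ) - M).det := by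
  rw [Matrix.charpoly, ← Polynomial.coe_evalRingHom, RingHom.map_det]
  congr 1
  ext i j
  by_cases h : i = j
  · subst h
    simp [Matrix.charmatrix_apply_eq, Matrix.one_apply]
  · simp [Matrix.charmatrix_apply_ne _ _ _ h, Matrix.one_apply, h]

lemma spec_eq_roots (M : Matrix (Fin n) (Fin n) ℂ) :
    spectrum ℂ M = {z : ℂ | M.charpoly.IsRoot z} := by
  ext z
  rw [spectrum.mem_iff, Matrix.isUnit_iff_isUnit_det, isUnit_iff_ne_zero, Set.mem_setOf_eq,
    IsRoot.def, eval_charpoly', not_not, Algebra.algebraMap_eq_smul_one]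

lemma exists_maxRoot [NeZero n] (M : Matrix (Fin n) (Fin n) ℝ) :
    ∃ z0 : ℂ, ((M.map Complex.ofReal).charpoly).IsRoot z0 ∧
      (∀ z : ℂ, ((M.map Complex.ofReal).charpoly).IsRoot z → ‖z‖ ≤ ‖z0‖) ∧
      specRad M = ‖z0‖ := by
  have hpm : ((M.map Complex.ofReal).charpoly).Monic := Matrix.charpoly_monic _
  have hfin : {z : ℂ | ((M.map Complex.ofReal).charpoly).IsRoot z}.Finite :=
    Polynomial.finite_setOf_isRoot hpm.ne_zero
  have hdeg : ((M.map Complex.ofReal).charpoly).degree ≠ 0 := by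
    rw [Matrix.charpoly_degree_eq_dim]
    simp only [Fintype.card_fin]
    exact_mod_cast Nat.cast_ne_zero.mpr (NeZero.ne n)
  obtain ⟨z1, hz1⟩ := Complex.isAlgClosed.exists_root _ hdeg
  obtain ⟨z0, hz0, hmax⟩ := Set.Finite.exists_maximalFor (fun z : ℂ => ‖z‖) _ hfin ⟨z1, hz1⟩
  have hmax' : ∀ z : ℂ, ((M.map Complex.ofReal).charpoly).IsRoot z →
      ‖z‖ ≤ ‖z0‖ := by
    intro z hz
    rcases le_total (‖z‖) (‖z0‖) with h | h
    · exact h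
    · exact hmax hz h
  refine ⟨z0, hz0, hmax', ?_⟩
  exact IsGreatest.csSup_eq ⟨⟨z0, hz0, rfl⟩, by rintro x ⟨z, hz, rfl⟩; exact hmax' z hz⟩

lemma specRad_nonneg [NeZero n] (M : Matrix (Fin n) (Fin n) ℝ) : 0 ≤ specRad M := by
  obtain ⟨z0, _, _, h⟩ := exists_maxRoot M
  rw [h]; exact norm_nonneg _

lemma spectralRadius_eq [NeZero n] (M : Matrix (Fin n) (Fin n) ℝ) :
    spectralRadius ℂ (M.map Complex.ofReal) = ENNReal.ofReal (specRad M) := by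
  obtain ⟨z0, hz0, hmax, hsr⟩ := exists_maxRoot M
  rw [hsr, ofReal_norm, enorm_eq_nnnorm]
  apply le_antisymm
  · apply iSup₂_le
    intro z hz
    rw [spec_eq_roots] at hz
    exact_mod_cast (by exact_mod_cast hmax z hz : ‖z‖₊ ≤ ‖z0‖₊)
  · have hz0' : z0 ∈ spectrum ℂ (M.map Complex.ofReal) := by
      rw [spec_eq_roots]; exact hz0
    exact le_iSup₂ (f := fun z (_ : z ∈ spectrum ℂ (M.map Complex.ofReal)) => (‖z‖₊ : ℝ≥0∞)) z0 hz0'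

lemma map_pow' (M : Matrix (Fin n) (Fin n) ℝ) (k : ℕ) :
    (M.map Complex.ofReal) ^ k = (M ^ k).map Complex.ofReal := by
  have := map_pow (Complex.ofRealHom.mapMatrix (m := Fin n)) M k
  exact this.symm

lemma mulVec_apply' (M : Matrix (Fin n) (Fin n) ℝ) (v : Fin n → ℝ) (i : Fin n) :
    (M *ᵥ v) i = ∑ j, M i j * v j := rfl

lemma pow_entry_nonneg {M : Matrix (Fin n) (Fin n) ℝ} (hM0 : ∀ i j, 0 ≤ M i j) :
    ∀ (k : ℕ) i j, 0 ≤ (M ^ k) i j := by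
  intro k
  induction k with
  | zero => intro i j; by_cases h : i = j <;> simp [Matrix.one_apply, h]
  | succ k ih =>
    intro i j
    rw [pow_succ, Matrix.mul_apply]
    exact Finset.sum_nonneg fun l _ => mul_nonneg (ih i l) (hM0 l j)

lemma mulVec_le_mulVec {M : Matrix (Fin n) (Fin n) ℝ} (hM0 : ∀ i j, 0 ≤ M i j)
    {a b : Fin n → ℝ} (hab : ∀ j, a j ≤ b j) (i : Fin n) : (M *ᵥ a) i ≤ (M *ᵥ b) i := by
  rw [mulVec_apply', mulVec_apply']
  exact Finset.sum_le_sum fun j _ => mul_le_mul_of_nonneg_left (hab j) (hM0 i j)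

lemma rowsum_le_norm (A : Matrix (Fin n) (Fin n) ℂ) (i : Fin n) :
    ∑ j, ‖A i j‖ ≤ ‖A‖ := by
  rw [Matrix.linfty_opNorm_def]
  have h : (∑ j, ‖A i j‖₊) ≤ Finset.univ.sup fun i => ∑ j, ‖A i j‖₊ :=
    Finset.le_sup (f := fun i => ∑ j, ‖A i j‖₊) (Finset.mem_univ i)
  calc ∑ j, ‖A i j‖ = ((∑ j, ‖A i j‖₊ : ℝ≥0) : ℝ) := by push_cast; rfl
    _ ≤ _ := by exact_mod_cast h

lemma specRad_pow_le_rowsum [NeZero n] (M : Matrix (Fin n) (Fin n) ℝ)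
    (hM0 : ∀ i j, 0 ≤ M i j) (k : ℕ) : ∃ i, specRad M ^ k ≤ ∑ j, (M ^ k) i j := by
  obtain ⟨z0, hz0, -, hsr⟩ := exists_maxRoot M
  have hdet : (z0 • (1 : Matrix (Fin n) (Fin n) ℂ) - M.map Complex.ofReal).det = 0 := by
    rw [← eval_charpoly']; exact hz0
  obtain ⟨v, hvne, hv⟩ := (Matrix.exists_mulVec_eq_zero_iff).mpr hdet
  have heig : (M.map Complex.ofReal) *ᵥ v = z0 • v := by
    rw [Matrix.sub_mulVec, Matrix.smul_mulVec, Matrix.one_mulVec, sub_eq_zero] at hv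
    exact hv.symm
  have heigk : ((M.map Complex.ofReal)) ^ k *ᵥ v = z0 ^ k • v := by
    induction k with
    | zero => simp
    | succ k ih =>
      rw [pow_succ, ← Matrix.mulVec_mulVec, heig, Matrix.mulVec_smul, ih, pow_succ, smul_smul,
        mul_comm]
  obtain ⟨i0, -, hi0⟩ := Finset.exists_max_image Finset.univ (fun i => ‖v i‖)
    Finset.univ_nonempty
  have hvpos : 0 < ‖v i0‖ := by
    obtain ⟨j, hj⟩ := Function.ne_iff.mp hvne
    have : (0 : Fin n → ℂ) j = 0 := rfl
    have hj' : v j ≠ 0 := by simpa [this] using hj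
    exact lt_of_lt_of_le (norm_pos_iff.mpr hj') (hi0 j (Finset.mem_univ j))
  refine ⟨i0, ?_⟩
  have hkey : specRad M ^ k * ‖v i0‖ ≤ (∑ j, (M ^ k) i0 j) * ‖v i0‖ := by
    have h1 : specRad M ^ k * ‖v i0‖ = ‖(z0 ^ k • v) i0‖ := by
      rw [hsr]
      simp only [Pi.smul_apply, smul_eq_mul, norm_mul, norm_pow]
    rw [h1, ← heigk]
    have h2 : ((M.map Complex.ofReal) ^ k *ᵥ v) i0 = ∑ j, (((M ^ k) i0 j : ℝ) : ℂ) * v j := by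
      rw [map_pow']; rfl
    rw [h2]
    calc ‖∑ j, (((M ^ k) i0 j : ℝ) : ℂ) * v j‖
        ≤ ∑ j, ‖(((M ^ k) i0 j : ℝ) : ℂ) * v j‖ :=
          norm_sum_le _ _
      _ = ∑ j, (M ^ k) i0 j * ‖v j‖ := by
          refine Finset.sum_congr rfl fun j _ => ?_
          rw [norm_mul, Complex.norm_real, Real.norm_eq_abs,
            abs_of_nonneg (pow_entry_nonneg hM0 k i0 j)]
      _ ≤ ∑ j, (M ^ k) i0 j * ‖v i0‖ :=
          Finset.sum_le_sum fun j _ => mul_le_mul_of_nonneg_left (hi0 j (Finset.mem_univ j))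
            (pow_entry_nonneg hM0 k i0 j)
      _ = (∑ j, (M ^ k) i0 j) * ‖v i0‖ := (Finset.sum_mul _ _ _).symm
  exact le_of_mul_le_mul_right hkey hvpos

lemma le_specRad_of_subinvariant [NeZero n] (M : Matrix (Fin n) (Fin n) ℝ)
    (hM0 : ∀ i j, 0 ≤ M i j) (q : Fin n → ℝ) (hq : ∀ i, 0 < q i) (α : ℝ) (hα : 0 ≤ α)
    (h : ∀ i, α * q i ≤ (M *ᵥ q) i) : α ≤ specRad M := by
  have hiter : ∀ (k : ℕ) i, α ^ k * q i ≤ ((M ^ k) *ᵥ q) i := by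
    intro k
    induction k with
    | zero => intro i; simp [Matrix.one_mulVec]
    | succ k ih =>
      intro i
      have h1 : ((M ^ (k+1)) *ᵥ q) i = ((M ^ k) *ᵥ (M *ᵥ q)) i := by
        rw [Matrix.mulVec_mulVec, ← pow_succ]
      have h3 : ((M ^ k) *ᵥ (fun j => α * q j)) i ≤ ((M ^ k) *ᵥ (M *ᵥ q)) i :=
        mulVec_le_mulVec (pow_entry_nonneg hM0 k) h i
      have h4 : ((M ^ k) *ᵥ (fun j => α * q j)) i = α * (((M ^ k) *ᵥ q) i) := by
        rw [mulVec_apply', mulVec_apply', Finset.mul_sum]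
        exact Finset.sum_congr rfl fun j _ => by ring
      calc α ^ (k+1) * q i = α * (α ^ k * q i) := by ring
        _ ≤ α * (((M ^ k) *ᵥ q) i) := mul_le_mul_of_nonneg_left (ih i) hα
        _ = ((M ^ k) *ᵥ (fun j => α * q j)) i := h4.symm
        _ ≤ ((M ^ k) *ᵥ (M *ᵥ q)) i := h3
        _ = ((M ^ (k+1)) *ᵥ q) i := h1.symm
  obtain ⟨i0, -, hi0⟩ := Finset.exists_max_image Finset.univ q Finset.univ_nonempty
  have hnorm : ∀ k : ℕ, α ^ k ≤ ‖(M.map Complex.ofReal) ^ k‖ := by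
    intro k
    have h1 : α ^ k * q i0 ≤ (∑ j, (M ^ k) i0 j) * q i0 := by
      refine (hiter k i0).trans ?_
      rw [mulVec_apply', Finset.sum_mul]
      exact Finset.sum_le_sum fun j _ => mul_le_mul_of_nonneg_left (hi0 j (Finset.mem_univ j))
        (pow_entry_nonneg hM0 k i0 j)
    have h2 : α ^ k ≤ ∑ j, (M ^ k) i0 j := le_of_mul_le_mul_right h1 (hq i0)
    refine h2.trans ?_
    rw [map_pow']
    refine le_trans (le_of_eq ?_) (rowsum_le_norm ((M ^ k).map Complex.ofReal) i0)
    refine Finset.sum_congr rfl fun j _ => ?_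
    rw [Matrix.map_apply, Complex.norm_real, Real.norm_eq_abs,
      abs_of_nonneg (pow_entry_nonneg hM0 k i0 j)]
  have hfin : spectralRadius ℂ (M.map Complex.ofReal) ≠ ⊤ := by
    rw [spectralRadius_eq]; exact ENNReal.ofReal_ne_top
  have T1 := spectrum.pow_norm_pow_one_div_tendsto_nhds_spectralRadius (M.map Complex.ofReal)
  have T2 : Tendsto (fun k : ℕ => ‖(M.map Complex.ofReal) ^ k‖ ^ (1/(k:ℝ))) atTop
      (𝓝 (specRad M)) := by
    have h3 := (ENNReal.tendsto_toReal hfin).comp T1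
    have h4 : (spectralRadius ℂ (M.map Complex.ofReal)).toReal = specRad M := by
      rw [spectralRadius_eq, ENNReal.toReal_ofReal (specRad_nonneg M)]
    rw [h4] at h3
    refine h3.congr fun k => ?_
    simp only [Function.comp_apply]
    exact ENNReal.toReal_ofReal (Real.rpow_nonneg (norm_nonneg _) _)
  refine ge_of_tendsto T2 ?_
  filter_upwards [eventually_ge_atTop 1] with k hk
  have hkne : (k : ℝ) ≠ 0 := Nat.cast_ne_zero.mpr (by omega)
  have hα' : α = (α ^ k) ^ (1/(k:ℝ)) := by
    rw [← Real.rpow_natCast α k, ← Real.rpow_mul hα, mul_one_div, div_self hkne, Real.rpow_one]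
  rw [hα']
  exact Real.rpow_le_rpow (pow_nonneg hα k) (hnorm k) (by positivity)

lemma mulVec_pos {M : Matrix (Fin n) (Fin n) ℝ} (hM : ∀ i j, 0 < M i j)
    {x : Fin n → ℝ} (hx0 : ∀ i, 0 ≤ x i) {j0 : Fin n} (hxj : 0 < x j0) (i : Fin n) :
    0 < (M *ᵥ x) i := by
  rw [mulVec_apply']
  refine Finset.sum_pos' (fun j _ => mul_nonneg (hM i j).le (hx0 j)) ⟨j0, Finset.mem_univ j0, ?_⟩
  exact mul_pos (hM i j0) hxj

lemma mulVec_nonneg {M : Matrix (Fin n) (Fin n) ℝ} (hM0 : ∀ i j, 0 ≤ M i j)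
    {x : Fin n → ℝ} (hx0 : ∀ i, 0 ≤ x i) (i : Fin n) : 0 ≤ (M *ᵥ x) i := by
  rw [mulVec_apply']
  exact Finset.sum_nonneg fun j _ => mul_nonneg (hM0 i j) (hx0 j)

/-- The key contradiction engine. -/
lemma engine [NeZero n] (C : Matrix (Fin n) (Fin n) ℝ) (hC0 : ∀ i j, 0 ≤ C i j)
    (K : ℕ) (hK : ∀ i j, 0 < (C ^ K) i j) (γ : ℝ) (hγ : 0 < γ)
    (hγr : γ * specRad C ≤ 1) (x w : Fin n → ℝ) (hx0 : ∀ i, 0 ≤ x i)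
    (j0 : Fin n) (hxj : 0 < x j0) (hw0 : ∀ i, 0 ≤ w i) (j1 : Fin n) (hwj : 0 < w j1)
    (hineq : ∀ i, x i / γ + w i ≤ (C *ᵥ x) i) : False := by
  set q : Fin n → ℝ := (C ^ K) *ᵥ x with hqdef
  have hq : ∀ i, 0 < q i := fun i => mulVec_pos hK hx0 hxj i
  set u : Fin n → ℝ := (C ^ K) *ᵥ w with hudef
  have hu : ∀ i, 0 < u i := fun i => mulVec_pos hK hw0 hwj i
  obtain ⟨imax, -, himax⟩ := Finset.exists_max_image Finset.univ q Finset.univ_nonempty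
  obtain ⟨imin, -, himin⟩ := Finset.exists_min_image Finset.univ u Finset.univ_nonempty
  set α : ℝ := 1/γ + u imin / q imax with hαdef
  have hα0 : 0 ≤ α := by
    have : 0 < u imin / q imax := div_pos (hu imin) (hq imax)
    positivity
  have hkey : ∀ i, α * q i ≤ (C *ᵥ q) i := by
    intro i
    have hcomm : (C *ᵥ q) i = ((C ^ K) *ᵥ (C *ᵥ x)) i := by
      rw [hqdef, Matrix.mulVec_mulVec, Matrix.mulVec_mulVec, ← pow_succ', ← pow_succ]
    have hmono : ((C ^ K) *ᵥ (fun l => x l / γ + w l)) i ≤ ((C ^ K) *ᵥ (C *ᵥ x)) i :=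
      mulVec_le_mulVec (pow_entry_nonneg hC0 K) hineq i
    have hlin : ((C ^ K) *ᵥ (fun l => x l / γ + w l)) i = q i / γ + u i := by
      rw [mulVec_apply', hqdef, hudef, mulVec_apply', mulVec_apply', Finset.sum_div,
        ← Finset.sum_add_distrib]
      exact Finset.sum_congr rfl fun j _ => by ring
    have h5 : (u imin / q imax) * q i ≤ u imin := by
      rw [div_mul_eq_mul_div, div_le_iff₀ (hq imax)]
      exact mul_le_mul_of_nonneg_left (himax i (Finset.mem_univ i)) (hu imin).le
    calc α * q i = q i / γ + (u imin / q imax) * q i := by rw [hαdef]; ring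
      _ ≤ q i / γ + u imin := by linarith
      _ ≤ q i / γ + u i := by linarith [himin i (Finset.mem_univ i)]
      _ = ((C ^ K) *ᵥ (fun l => x l / γ + w l)) i := hlin.symm
      _ ≤ ((C ^ K) *ᵥ (C *ᵥ x)) i := hmono
      _ = (C *ᵥ q) i := hcomm.symm
  have hle := le_specRad_of_subinvariant C hC0 q hq α hα0 hkey
  have h1 : specRad C ≤ 1/γ := by
    rw [le_div_iff₀ hγ, mul_comm]
    exact hγr
  have h2 : 0 < u imin / q imax := div_pos (hu imin) (hq imax)
  rw [hαdef] at hle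
  linarith

end SpecAux

open SpecAux in
theorem stmt10 {n : ℕ} (A : Matrix (Fin n) (Fin n) ℝ) (hA : ∀ i j, 0 ≤ A i j)
    (hdiag : ∀ i, A i i = 0) (μ η : Fin n → ℝ) (hμ : ∀ i, 0 ≤ μ i) (hη : ∀ i, 0 < η i)
    (pbar : ℝ) (hp : 0 < pbar) (Ω : Finset (Fin n)) (hΩ : Ω.Nonempty)
    (B C : Matrix (Fin n) (Fin n) ℝ) (hB : B = Matrix.diagonal μ * A) (hBprim : Primitive B)
    (hC : C = psi B (fun i => η i / pbar) Ω) (hCprim : Primitive C) :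
    ∀ γ : ℝ, 0 < γ → γ ≤ 1 / specRad C →
      ∀ p : Fin n → ℝ, ((1 : Matrix (Fin n) (Fin n) ℝ) - γ • B) *ᵥ p = γ • η →
        (∀ i, 0 ≤ p i) ∧ (∑ i ∈ Ω, p i ≤ pbar)
          ∧ (γ = 1 / specRad C → ∑ i ∈ Ω, p i = pbar) := by
  intro γ hγ0 hγr p heq
  -- n ≠ 0
  rcases Nat.eq_zero_or_pos n with hn | hn
  · exfalso; obtain ⟨i, -⟩ := hΩ; subst hn; exact i.elim0
  haveI : NeZero n := ⟨hn.ne'⟩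
  have hr0 : 0 ≤ specRad C := specRad_nonneg C
  have hrpos : 0 < specRad C := by
    rcases hr0.lt_or_eq with h | h
    · exact h
    · exfalso; rw [← h] at hγr; simp at hγr; linarith
  have hγr1 : γ * specRad C ≤ 1 := by
    rw [← le_div_iff₀ hrpos] at *
    · linarith [hγr]
  -- nonnegativity facts
  have hB0 : ∀ i j, 0 ≤ B i j := by
    intro i j; rw [hB, Matrix.diagonal_mul]; exact mul_nonneg (hμ i) (hA i j)
  have hCB : ∀ i j, B i j ≤ C i j := by
    intro i j; rw [hC]; unfold psi
    split_ifs with h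
    · have : 0 ≤ η i / pbar := div_nonneg (hη i).le hp.le
      linarith
    · exact le_rfl
  have hC0 : ∀ i j, 0 ≤ C i j := fun i j => (hB0 i j).trans (hCB i j)
  obtain ⟨K, hK⟩ := hCprim
  -- the equation, entrywise
  have hpeq : ∀ i, p i = γ * ((B *ᵥ p) i) + γ * η i := by
    intro i
    have h1 := congrFun heq i
    rw [Matrix.sub_mulVec, Matrix.one_mulVec, Matrix.smul_mulVec] at h1
    have h2 : p i - γ * (B *ᵥ p) i = γ * η i := by
      simpa [Pi.sub_apply, Pi.smul_apply, smul_eq_mul] using h1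
    linarith
  set s : ℝ := ∑ i ∈ Ω, p i with hs
  have hCp : ∀ i, (C *ᵥ p) i = (B *ᵥ p) i + s * (η i / pbar) := by
    intro i
    rw [mulVec_apply', mulVec_apply', hC]
    unfold psi
    have h1 : ∀ j, (if j ∈ Ω then B i j + η i / pbar else B i j) * p j
        = B i j * p j + (if j ∈ Ω then (η i / pbar) * p j else 0) := by
      intro j; split_ifs with h <;> ring
    rw [Finset.sum_congr rfl fun j _ => h1 j, Finset.sum_add_distrib]
    congr 1
    rw [Finset.sum_ite_mem, Finset.univ_inter, hs, Finset.sum_mul]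
    exact Finset.sum_congr rfl fun j _ => by ring
  set t : ℝ := 1 - s / pbar with ht
  have hpeqC : ∀ i, p i = γ * ((C *ᵥ p) i) + γ * t * η i := by
    intro i
    rw [hCp i, ht, hpeq i]
    field_simp
    ring
  -- Step B : p ≥ 0
  have hstepB : ∀ i, 0 ≤ p i := by
    by_contra hcon
    push_neg at hcon
    obtain ⟨i0, hi0⟩ := hcon
    set x : Fin n → ℝ := fun i => max (-p i) 0 with hx
    set w : Fin n → ℝ := fun i => if p i < 0 then η i else 0 with hw
    have hxdef : ∀ i, x i = max (-p i) 0 := fun _ => rfl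
    have hwdef : ∀ i, w i = if p i < 0 then η i else 0 := fun _ => rfl
    refine engine C hC0 K hK γ hγ0 hγr1 x w (fun i => le_max_right _ _) i0 ?_
      (fun i => by rw [hwdef i]; split_ifs with h; exacts [(hη i).le, le_rfl]) i0 ?_ ?_
    · rw [hxdef i0]; simp only [lt_max_iff]; left; linarith
    · rw [hwdef i0, if_pos hi0]; exact hη i0
    · intro i
      have hBx : -((B *ᵥ p) i) ≤ (B *ᵥ x) i := by
        rw [mulVec_apply', mulVec_apply', ← Finset.sum_neg_distrib]
        refine Finset.sum_le_sum fun j _ => ?_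
        rw [← mul_neg]
        exact mul_le_mul_of_nonneg_left (le_max_left _ _) (hB0 i j)
      have hBC : (B *ᵥ x) i ≤ (C *ᵥ x) i := by
        rw [mulVec_apply', mulVec_apply']
        exact Finset.sum_le_sum fun j _ => mul_le_mul_of_nonneg_right (hCB i j)
          (le_max_right _ _)
      have hBp : -((B *ᵥ p) i) = η i - p i / γ := by
        have := hpeq i
        field_simp
        linarith
      by_cases h : p i < 0
      · have hxi : x i = -p i := by rw [hxdef i]; exact max_eq_left (by linarith)
        have hwi : w i = η i := by rw [hwdef i, if_pos h]
        rw [hxi, hwi]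
        have : -p i / γ + η i = η i - p i / γ := by ring
        rw [this, ← hBp]
        linarith
      · have hxi : x i = 0 := by rw [hxdef i]; exact max_eq_right (by linarith)
        have hwi : w i = 0 := by rw [hwdef i, if_neg h]
        rw [hxi, hwi]
        have : 0 ≤ (C *ᵥ x) i := mulVec_nonneg hC0 (fun j => le_max_right _ _) i
        rw [zero_div, add_zero]
        exact this
  -- Step A : t ≥ 0
  have hstepA : 0 ≤ t := by
    by_contra hcon
    push_neg at hcon
    have hpne : ∃ j, 0 < p j := by
      by_contra hz
      push_neg at hz
      have hall : ∀ j, p j = 0 := fun j => le_antisymm (hz j) (hstepB j)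
      have i := (⟨0, hn⟩ : Fin n)
      have h1 := hpeqC i
      rw [hall i] at h1
      have h2 : (C *ᵥ p) i = 0 := by
        rw [mulVec_apply']
        exact Finset.sum_eq_zero fun j _ => by rw [hall j, mul_zero]
      rw [h2] at h1
      have : γ * t * η i < 0 := mul_neg_of_neg_of_pos (mul_neg_of_pos_of_neg hγ0 hcon) (hη i)
      linarith
    obtain ⟨jp, hjp⟩ := hpne
    refine engine C hC0 K hK γ hγ0 hγr1 p (fun i => (-t) * η i) hstepB jp hjp
      (fun i => mul_nonneg (by linarith) (hη i).le) jp
      (mul_pos (by linarith) (hη jp)) ?_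
    intro i
    have := hpeqC i
    have h2 : (C *ᵥ p) i = p i / γ + (-t) * η i := by
      field_simp
      linarith
    rw [h2]
  have hsle : s ≤ pbar := by
    have h1 : s / pbar ≤ 1 := by
      have h2 := hstepA; rw [ht] at h2; linarith
    calc s = (s / pbar) * pbar := by field_simp
      _ ≤ 1 * pbar := mul_le_mul_of_nonneg_right h1 hp.le
      _ = pbar := one_mul pbar
  refine ⟨hstepB, hsle, ?_⟩
  intro hγeq
  by_contra hne
  have hslt : s < pbar := lt_of_le_of_ne hsle hne
  have hts : 0 < t := by
    have h1 := (div_lt_one hp).mpr hslt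
    rw [ht]; linarith
  have hγr' : γ * specRad C = 1 := by rw [hγeq]; field_simp
  obtain ⟨imin, -, hmin⟩ := Finset.exists_min_image Finset.univ η Finset.univ_nonempty
  set c : ℝ := γ * t * η imin with hc
  have hcpos : 0 < c := by
    rw [hc]; exact mul_pos (mul_pos hγ0 hts) (hη imin)
  -- partial sums
  set v : ℕ → Fin n → ℝ := fun k i => ∑ j ∈ Finset.range k, γ^(j+1) * t * (((C ^ j) *ᵥ η) i)
    with hv
  have hvdef : ∀ k i, v k i = ∑ j ∈ Finset.range k, γ^(j+1) * t * (((C ^ j) *ᵥ η) i) :=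
    fun _ _ => rfl
  have hswap : ∀ k i, (C *ᵥ (v k)) i
      = ∑ j ∈ Finset.range k, γ^(j+1) * t * (((C ^ (j+1)) *ᵥ η) i) := by
    intro k i
    rw [mulVec_apply']
    calc ∑ l, C i l * v k l
        = ∑ l, ∑ j ∈ Finset.range k, C i l * (γ^(j+1) * t * (((C ^ j) *ᵥ η) l)) := by
          refine Finset.sum_congr rfl fun l _ => ?_
          rw [hvdef k l, Finset.mul_sum]
      _ = ∑ j ∈ Finset.range k, ∑ l, C i l * (γ^(j+1) * t * (((C ^ j) *ᵥ η) l)) :=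
          Finset.sum_comm
      _ = ∑ j ∈ Finset.range k, γ^(j+1) * t * (((C ^ (j+1)) *ᵥ η) i) := by
          refine Finset.sum_congr rfl fun j _ => ?_
          have h1 : ((C ^ (j+1)) *ᵥ η) i = (C *ᵥ ((C ^ j) *ᵥ η)) i := by
            rw [Matrix.mulVec_mulVec, ← pow_succ']
          rw [h1, mulVec_apply', Finset.mul_sum]
          exact Finset.sum_congr rfl fun l _ => by ring
  have hrec : ∀ k i, v (k+1) i = γ * t * η i + γ * ((C *ᵥ (v k)) i) := by
    intro k i
    rw [hvdef (k+1) i, hswap k i, Finset.sum_range_succ', Finset.mul_sum]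
    simp only [pow_zero, Matrix.one_mulVec, zero_add, pow_one]
    rw [add_comm]
    congr 1
    exact Finset.sum_congr rfl fun j _ => by ring
  have hvlep : ∀ k i, v k i ≤ p i := by
    intro k
    induction k with
    | zero => intro i; rw [hvdef 0 i]; simpa using hstepB i
    | succ k ih =>
      intro i
      rw [hrec k i]
      have h1 : (C *ᵥ (v k)) i ≤ (C *ᵥ p) i := mulVec_le_mulVec hC0 ih i
      have h2 := hpeqC i
      nlinarith
  have hsum : ∀ k : ℕ, (k : ℝ) * c ≤ ∑ i, v k i := by
    intro k
    have hterm : ∀ j : ℕ, c ≤ ∑ i, γ^(j+1) * t * (((C ^ j) *ᵥ η) i) := by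
      intro j
      obtain ⟨istar, hρ⟩ := specRad_pow_le_rowsum C hC0 j
      have hηmin : ∀ l, η imin ≤ η l := fun l => hmin l (Finset.mem_univ l)
      have h1 : η imin * (specRad C ^ j) ≤ ((C ^ j) *ᵥ η) istar := by
        rw [mulVec_apply']
        calc η imin * specRad C ^ j ≤ η imin * ∑ l, (C ^ j) istar l :=
              mul_le_mul_of_nonneg_left hρ (hη imin).le
          _ = ∑ l, (C ^ j) istar l * η imin := by
              rw [Finset.mul_sum]; exact Finset.sum_congr rfl fun l _ => by ring
          _ ≤ ∑ l, (C ^ j) istar l * η l := Finset.sum_le_sum fun l _ =>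
              mul_le_mul_of_nonneg_left (hηmin l) (pow_entry_nonneg hC0 j istar l)
      have h2 : ((C ^ j) *ᵥ η) istar ≤ ∑ i, ((C ^ j) *ᵥ η) i :=
        Finset.single_le_sum
          (fun i _ => mulVec_nonneg (pow_entry_nonneg hC0 j) (fun l => (hη l).le) i)
          (Finset.mem_univ istar)
      have h3 : ∑ i, γ^(j+1) * t * (((C ^ j) *ᵥ η) i)
          = γ^(j+1) * t * ∑ i, ((C ^ j) *ᵥ η) i := by
        rw [Finset.mul_sum]
      rw [h3]
      have h4 : γ^(j+1) * t * (η imin * specRad C ^ j) = c * (γ * specRad C)^j := by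
        rw [hc]; ring
      have h5 : c = c * (γ * specRad C)^j := by rw [hγr', one_pow, mul_one]
      rw [h5, ← h4]
      have hpos : (0:ℝ) < γ^(j+1) * t := mul_pos (pow_pos hγ0 _) hts
      exact mul_le_mul_of_nonneg_left (h1.trans h2) hpos.le
    calc (k:ℝ) * c = ∑ _j ∈ Finset.range k, c := by
          rw [Finset.sum_const, Finset.card_range, nsmul_eq_mul]
      _ ≤ ∑ j ∈ Finset.range k, ∑ i, γ^(j+1) * t * (((C ^ j) *ᵥ η) i) :=
          Finset.sum_le_sum fun j _ => hterm j
      _ = ∑ i, v k i := by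
          rw [Finset.sum_comm]
  obtain ⟨k, hk⟩ := exists_nat_gt ((∑ i, p i) / c)
  have h6 := hsum k
  have h7 : ∑ i, v k i ≤ ∑ i, p i := Finset.sum_le_sum fun i _ => hvlep k i
  rw [div_lt_iff₀ hcpos] at hk
  linarith
end

section
/- Under the same setup, for every γ with γ*(C) < γ < 1/λ*(B), the solution p = γ(I − γB)^{-1}η violates the power constraint: Σ_{i∈Ω} p_i > p̄_Ω. Hence γ* = 1/λ*(C) is the maximum achievable common SINR level subject to p ≥ 0 and Σ_{i∈Ω} p_i ≤ p̄_Ω. -/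
open Matrix BigOperators Polynomial Filter
open scoped NNReal ENNReal

noncomputable def Complex.abs : AbsoluteValue ℂ ℝ := IsAbsoluteValue.toAbsoluteValue (norm : ℂ → ℝ)
lemma Complex.norm_eq_abs (z : ℂ) : ‖z‖ = Complex.abs z := rfl
lemma Complex.abs_ofReal (r : ℝ) : Complex.abs (r : ℂ) = |r| := Complex.norm_real r
lemma ofReal_norm_eq_coe_nnnorm {E : Type*} [SeminormedAddCommGroup E] (a : E) :
    ENNReal.ofReal ‖a‖ = (‖a‖₊ : ℝ≥0∞) := ofReal_norm a

variable {n : ℕ}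

lemma charpoly_eval_eq (M : Matrix (Fin n) (Fin n) ℂ) (z : ℂ) :
    M.charpoly.eval z = (z • (1 : Matrix (Fin n) (Fin n) ℂ) - M).det := by
  rw [Matrix.charpoly, eval_det, matPolyEquiv_charmatrix]
  congr 1
  rw [eval_sub, eval_X, eval_C, scalar_apply]
  congr 1
  ext i j
  by_cases h : i = j <;> simp [h, Matrix.diagonal, Matrix.one_apply]

lemma isRoot_charpoly_iff (M : Matrix (Fin n) (Fin n) ℂ) (z : ℂ) :
    M.charpoly.IsRoot z ↔ ∃ x, x ≠ 0 ∧ M *ᵥ x = z • x := by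
  rw [Polynomial.IsRoot, charpoly_eval_eq, ← Matrix.exists_mulVec_eq_zero_iff]
  constructor
  · rintro ⟨x, hx, hx0⟩
    refine ⟨x, hx, ?_⟩
    have : z • x - M *ᵥ x = 0 := by
      rw [← hx0, Matrix.sub_mulVec, Matrix.smul_mulVec, Matrix.one_mulVec]
    exact (sub_eq_zero.mp this).symm
  · rintro ⟨x, hx, hx0⟩
    exact ⟨x, hx, by rw [Matrix.sub_mulVec, Matrix.smul_mulVec, Matrix.one_mulVec, hx0, sub_self]⟩

lemma specRad_spec (hn : 0 < n) (M : Matrix (Fin n) (Fin n) ℝ) :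
    ∃ z : ℂ, (M.map Complex.ofReal).charpoly.IsRoot z ∧ Complex.abs z = specRad M ∧
      ∀ w : ℂ, (M.map Complex.ofReal).charpoly.IsRoot w → Complex.abs w ≤ specRad M := by
  set p := (M.map Complex.ofReal).charpoly with hp
  have hmon : p.Monic := Matrix.charpoly_monic _
  have hne : p ≠ 0 := hmon.ne_zero
  have hdeg : 0 < p.degree := by
    rw [hp, Matrix.charpoly_degree_eq_dim]
    simpa using hn
  obtain ⟨z0, hz0⟩ := Complex.exists_root hdeg
  have hSfin : {z : ℂ | p.IsRoot z}.Finite := p.finite_setOf_isRoot hne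
  have hTfin : (Complex.abs '' {z : ℂ | p.IsRoot z}).Finite := hSfin.image _
  have hTne : (Complex.abs '' {z : ℂ | p.IsRoot z}).Nonempty := ⟨_, ⟨z0, hz0, rfl⟩⟩
  have hmem : sSup (Complex.abs '' {z : ℂ | p.IsRoot z}) ∈ Complex.abs '' {z : ℂ | p.IsRoot z} :=
    hTne.csSup_mem hTfin
  obtain ⟨z, hzr, hzs⟩ := hmem
  exact ⟨z, hzr, hzs, fun w hw => le_csSup hTfin.bddAbove ⟨w, hw, rfl⟩⟩

lemma specRad_nonneg (hn : 0 < n) (M : Matrix (Fin n) (Fin n) ℝ) : 0 ≤ specRad M := by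
  obtain ⟨z, _, hz, _⟩ := specRad_spec hn M
  rw [← hz]; positivity

lemma mapC_mulVec_apply (M : Matrix (Fin n) (Fin n) ℝ) (x : Fin n → ℂ) (i : Fin n) :
    ((M.map Complex.ofReal) *ᵥ x) i = ∑ j, (M i j : ℂ) * x j := by
  simp [Matrix.mulVec, dotProduct, Matrix.map_apply]

lemma upperCW (hn : 0 < n) (M : Matrix (Fin n) (Fin n) ℝ) (hM : ∀ i j, 0 ≤ M i j)
    (w : Fin n → ℝ) (hw : ∀ i, 0 < w i) (r : ℝ) (h : ∀ i, (M *ᵥ w) i ≤ r * w i) :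
    specRad M ≤ r := by
  obtain ⟨z, hzr, hzs, _⟩ := specRad_spec hn M
  rw [← hzs]
  obtain ⟨x, hx0, hxe⟩ := (isRoot_charpoly_iff _ z).mp hzr
  obtain ⟨i, -, hi⟩ := Finset.exists_max_image Finset.univ
    (fun j => Complex.abs (x j) / w j) ⟨⟨0, hn⟩, Finset.mem_univ _⟩
  set t := Complex.abs (x i) / w i with ht
  have hbound : ∀ j, Complex.abs (x j) ≤ t * w j := by
    intro j
    have := hi j (Finset.mem_univ j)
    rw [div_le_div_iff₀ (hw j) (hw i)] at this
    rw [ht, div_mul_eq_mul_div, le_div_iff₀ (hw i)]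
    linarith
  have hxi : 0 < Complex.abs (x i) := by
    by_contra hcon
    push_neg at hcon
    have hxi0 : Complex.abs (x i) = 0 := le_antisymm hcon (by positivity)
    obtain ⟨j, hj⟩ := Function.ne_iff.mp hx0
    have h1 : 0 < Complex.abs (x j) := by simpa [AbsoluteValue.pos_iff] using hj
    have h2 := hbound j
    rw [ht, hxi0] at h2
    simp at h2
    exact hj (by simpa using h2)
  have key : Complex.abs z * Complex.abs (x i) ≤ r * Complex.abs (x i) := by
    have he : (z * x i) = ∑ j, (M i j : ℂ) * x j := by
      rw [← mapC_mulVec_apply, hxe]; simp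
    calc Complex.abs z * Complex.abs (x i) = Complex.abs (z * x i) := (map_mul _ _ _).symm
      _ = Complex.abs (∑ j, (M i j : ℂ) * x j) := by rw [he]
      _ ≤ ∑ j, Complex.abs ((M i j : ℂ) * x j) := Complex.abs.sum_le _ _
      _ = ∑ j, M i j * Complex.abs (x j) := by
          refine Finset.sum_congr rfl fun j _ => ?_
          rw [_root_.map_mul, Complex.abs_ofReal, abs_of_nonneg (hM i j)]
      _ ≤ ∑ j, M i j * (t * w j) := Finset.sum_le_sum fun j _ =>
          mul_le_mul_of_nonneg_left (hbound j) (hM i j)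
      _ = t * (M *ᵥ w) i := by
          simp only [Matrix.mulVec, dotProduct, Finset.mul_sum]
          exact Finset.sum_congr rfl fun j _ => by rw [ht]; ring
      _ ≤ t * (r * w i) := by
          have ht0 : 0 ≤ t := div_nonneg (apply_nonneg _ _) (hw i).le
          exact mul_le_mul_of_nonneg_left (h i) ht0
      _ = r * (t * w i) := by ring
      _ = r * Complex.abs (x i) := by rw [ht, div_mul_cancel₀ _ (hw i).ne']
  exact le_of_mul_le_mul_right key hxi

section Gelfand

attribute [local instance] Matrix.linftyOpNormedAddCommGroup Matrix.linftyOpNormedRing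
  Matrix.linftyOpNormedAlgebra

example : CompleteSpace (Matrix (Fin n) (Fin n) ℂ) := by infer_instance

lemma spectrum_eq_roots (M : Matrix (Fin n) (Fin n) ℂ) :
    spectrum ℂ M = {z : ℂ | M.charpoly.IsRoot z} := by
  ext z
  rw [spectrum.mem_iff, Set.mem_setOf_eq, Polynomial.IsRoot, charpoly_eval_eq,
    Algebra.algebraMap_eq_smul_one, Matrix.isUnit_iff_isUnit_det, isUnit_iff_ne_zero, not_ne_iff]

lemma row_sum_le_norm (A : Matrix (Fin n) (Fin n) ℂ) (i : Fin n) :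
    ∑ j, Complex.abs (A i j) ≤ ‖A‖ := by
  have h1 : (∑ j, ‖A i j‖₊ : ℝ≥0) ≤ ‖A‖₊ := by
    rw [Matrix.linfty_opNNNorm_def]
    exact Finset.le_sup (f := fun i => ∑ j, ‖A i j‖₊) (Finset.mem_univ i)
  calc ∑ j, Complex.abs (A i j) = ((∑ j, ‖A i j‖₊ : ℝ≥0) : ℝ) := by
        push_cast
        exact Finset.sum_congr rfl fun j _ => (Complex.norm_eq_abs _).symm
    _ ≤ ‖A‖ := h1

lemma pow_entries_nonneg (M : Matrix (Fin n) (Fin n) ℝ) (hM : ∀ i j, 0 ≤ M i j) (m : ℕ) :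
    ∀ i j, 0 ≤ (M ^ m) i j := by
  induction m with
  | zero => intro i j; by_cases h : i = j <;> simp [h, Matrix.one_apply]
  | succ m ih =>
    intro i j
    rw [pow_succ, Matrix.mul_apply]
    exact Finset.sum_nonneg fun l _ => mul_nonneg (ih i l) (hM l j)

lemma mulVec_mono (M : Matrix (Fin n) (Fin n) ℝ) (hM : ∀ i j, 0 ≤ M i j)
    {u v : Fin n → ℝ} (huv : ∀ j, u j ≤ v j) (i : Fin n) : (M *ᵥ u) i ≤ (M *ᵥ v) i := by
  simp only [Matrix.mulVec, dotProduct]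
  exact Finset.sum_le_sum fun j _ => mul_le_mul_of_nonneg_left (huv j) (hM i j)

lemma map_pow_comm (M : Matrix (Fin n) (Fin n) ℝ) (m : ℕ) :
    (M.map Complex.ofReal) ^ m = (M ^ m).map Complex.ofReal := by
  induction m with
  | zero =>
    ext i j; by_cases h : i = j <;> simp [h, Matrix.one_apply, Matrix.map_apply]
  | succ m ih =>
    rw [pow_succ, pow_succ, ih]
    ext i j
    simp [Matrix.mul_apply, Matrix.map_apply]

lemma lowerCW (hn : 0 < n) (M : Matrix (Fin n) (Fin n) ℝ) (hM : ∀ i j, 0 ≤ M i j)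
    (w : Fin n → ℝ) (hw : ∀ i, 0 < w i) (r : ℝ) (hr : 0 ≤ r)
    (h : ∀ i, r * w i ≤ (M *ᵥ w) i) : r ≤ specRad M := by
  -- iterate the inequality
  have iter : ∀ m : ℕ, ∀ i, r ^ m * w i ≤ ((M ^ m) *ᵥ w) i := by
    intro m
    induction m with
    | zero => intro i; simp [Matrix.one_mulVec]
    | succ m ih =>
      intro i
      have h3 : (M *ᵥ fun j => r ^ m * w j) i = r ^ m * (M *ᵥ w) i := by
        simp only [Matrix.mulVec, dotProduct, Finset.mul_sum]
        exact Finset.sum_congr rfl fun j _ => by ring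
      have key : r ^ (m + 1) * w i ≤ (M *ᵥ ((M ^ m) *ᵥ w)) i := by
        calc r ^ (m + 1) * w i = r ^ m * (r * w i) := by ring
          _ ≤ r ^ m * (M *ᵥ w) i := mul_le_mul_of_nonneg_left (h i) (pow_nonneg hr m)
          _ = (M *ᵥ fun j => r ^ m * w j) i := h3.symm
          _ ≤ (M *ᵥ ((M ^ m) *ᵥ w)) i := mulVec_mono M hM ih i
      rwa [Matrix.mulVec_mulVec, ← pow_succ'] at key
  -- pick index of maximal w
  obtain ⟨i, -, hi⟩ := Finset.exists_max_image Finset.univ w ⟨⟨0, hn⟩, Finset.mem_univ _⟩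
  have hWpos : 0 < w i := hw i
  -- norm lower bound
  have normlb : ∀ m : ℕ, r ^ m ≤ ‖(M.map Complex.ofReal) ^ m‖ := by
    intro m
    have h1 : r ^ m * w i ≤ ∑ j, (M ^ m) i j * w j := iter m i
    have h2 : ∑ j, (M ^ m) i j * w j ≤ ∑ j, (M ^ m) i j * w i :=
      Finset.sum_le_sum fun j _ => mul_le_mul_of_nonneg_left (hi j (Finset.mem_univ j))
        (pow_entries_nonneg M hM m i j)
    have h3 : r ^ m ≤ ∑ j, (M ^ m) i j := by
      have := (h1.trans h2)
      rw [← Finset.sum_mul] at this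
      exact (mul_le_mul_iff_left₀ hWpos).mp this
    calc r ^ m ≤ ∑ j, (M ^ m) i j := h3
      _ ≤ ∑ j, Complex.abs (((M ^ m).map Complex.ofReal) i j) := by
          refine Finset.sum_le_sum fun j _ => ?_
          rw [Matrix.map_apply, Complex.abs_ofReal]
          exact le_abs_self _
      _ ≤ ‖(M ^ m).map Complex.ofReal‖ := row_sum_le_norm _ i
      _ = ‖(M.map Complex.ofReal) ^ m‖ := by rw [map_pow_comm]
  -- Gelfand
  set a := M.map Complex.ofReal
  have gel := spectrum.limsup_pow_nnnorm_pow_one_div_le_spectralRadius a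
  have hlb : (ENNReal.ofReal r) ≤ limsup (fun m : ℕ => (‖a ^ m‖₊ : ℝ≥0∞) ^ (1 / m : ℝ)) atTop := by
    have hev : ∀ᶠ m : ℕ in atTop, ENNReal.ofReal r ≤ (‖a ^ m‖₊ : ℝ≥0∞) ^ (1 / m : ℝ) := by
      filter_upwards [eventually_ge_atTop 1] with m hm
      have h1 : (ENNReal.ofReal r) ^ (m : ℝ) ≤ (‖a ^ m‖₊ : ℝ≥0∞) := by
        rw [← ofReal_norm_eq_coe_nnnorm, ENNReal.ofReal_rpow_of_nonneg hr (by positivity)]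
        exact ENNReal.ofReal_le_ofReal (by rw [Real.rpow_natCast]; exact normlb m)
      have h2 := ENNReal.rpow_le_rpow h1 (by positivity : (0:ℝ) ≤ 1 / m)
      rwa [← ENNReal.rpow_mul, mul_one_div, div_self
        (Nat.cast_ne_zero.mpr (by omega)), ENNReal.rpow_one] at h2
    calc ENNReal.ofReal r = limsup (fun _ : ℕ => ENNReal.ofReal r) atTop := limsup_const _ |>.symm
      _ ≤ _ := limsup_le_limsup hev
  have hub : spectralRadius ℂ a ≤ ENNReal.ofReal (specRad M) := by
    rw [spectralRadius]
    refine iSup₂_le fun z hz => ?_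
    have hzr : Complex.abs z ≤ specRad M := by
      obtain ⟨-, -, -, hmax⟩ := specRad_spec hn M
      exact hmax z (by rwa [spectrum_eq_roots] at hz)
    rw [← ofReal_norm_eq_coe_nnnorm]
    exact ENNReal.ofReal_le_ofReal (by simpa [Complex.norm_eq_abs] using hzr)
  have : ENNReal.ofReal r ≤ ENNReal.ofReal (specRad M) := hlb.trans (gel.trans hub)
  rwa [ENNReal.ofReal_le_ofReal_iff (specRad_nonneg hn M)] at this


lemma map_smul_comm (M : Matrix (Fin n) (Fin n) ℝ) (γ : ℝ) :
    (γ • M).map Complex.ofReal = (γ : ℂ) • M.map Complex.ofReal := by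
  ext i j; simp [Matrix.map_apply]

lemma specRad_smul_le (hn : 0 < n) (M : Matrix (Fin n) (Fin n) ℝ) (γ : ℝ) (hγ : 0 < γ) :
    specRad (γ • M) ≤ γ * specRad M := by
  obtain ⟨z, hzr, hzs, -⟩ := specRad_spec hn (γ • M)
  obtain ⟨-, -, -, hmax⟩ := specRad_spec hn M
  obtain ⟨x, hx0, hxe⟩ := (isRoot_charpoly_iff _ z).mp hzr
  rw [map_smul_comm, Matrix.smul_mulVec] at hxe
  have hγ0 : (γ : ℂ) ≠ 0 := by exact_mod_cast hγ.ne'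
  have hxe' : (M.map Complex.ofReal) *ᵥ x = (z / γ) • x := by
    funext i
    have h2 := congrFun hxe i
    simp only [Pi.smul_apply, smul_eq_mul] at h2 ⊢
    field_simp
    linear_combination h2
  have hroot : (M.map Complex.ofReal).charpoly.IsRoot (z / γ) :=
    (isRoot_charpoly_iff _ _).mpr ⟨x, hx0, hxe'⟩
  have hb := hmax _ hroot
  rw [← hzs]
  have : Complex.abs z = γ * Complex.abs (z / γ) := by
    rw [map_div₀, Complex.abs_ofReal, abs_of_pos hγ]
    field_simp
  rw [this]
  exact mul_le_mul_of_nonneg_left hb hγ.le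

lemma pow_entries_small (hn : 0 < n) (N : Matrix (Fin n) (Fin n) ℝ) (hρ : specRad N < 1) :
    ∃ c : ℝ, 0 ≤ c ∧ c < 1 ∧ ∀ᶠ m : ℕ in atTop, ∀ i j, |(N ^ m) i j| ≤ c ^ m := by
  set ρ := specRad N
  have hρ0 : 0 ≤ ρ := specRad_nonneg hn N
  set c := (ρ + 1) / 2 with hc
  have hc0 : 0 < c := by positivity
  have hc1 : c < 1 := by rw [hc]; linarith
  have hρc : ρ < c := by rw [hc]; linarith
  refine ⟨c, hc0.le, hc1, ?_⟩
  set a := N.map Complex.ofReal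
  have hub : spectralRadius ℂ a < ENNReal.ofReal c := by
    have h1 : spectralRadius ℂ a ≤ ENNReal.ofReal ρ := by
      rw [spectralRadius]
      refine iSup₂_le fun z hz => ?_
      obtain ⟨-, -, -, hmax⟩ := specRad_spec hn N
      have := hmax z (by rwa [spectrum_eq_roots] at hz)
      rw [← ofReal_norm_eq_coe_nnnorm]
      exact ENNReal.ofReal_le_ofReal (by simpa [Complex.norm_eq_abs] using this)
    exact h1.trans_lt ((ENNReal.ofReal_lt_ofReal_iff hc0).mpr hρc)
  have gel := spectrum.pow_nnnorm_pow_one_div_tendsto_nhds_spectralRadius a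
  have hev := gel.eventually_lt_const hub
  filter_upwards [hev, eventually_ge_atTop 1] with m hm hm1 i j
  have hnorm : ‖a ^ m‖ ≤ c ^ m := by
    have h1 : (‖a ^ m‖₊ : ℝ≥0∞) ≤ ENNReal.ofReal (c ^ m) := by
      have h2 := ENNReal.rpow_le_rpow hm.le (by positivity : (0:ℝ) ≤ (m : ℝ))
      rw [← ENNReal.rpow_mul, one_div, inv_mul_cancel₀ (Nat.cast_ne_zero.mpr (by omega)),
        ENNReal.rpow_one] at h2
      calc (‖a ^ m‖₊ : ℝ≥0∞) ≤ (ENNReal.ofReal c) ^ ((m : ℕ) : ℝ) := h2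
        _ = ENNReal.ofReal (c ^ ((m : ℕ) : ℝ)) := ENNReal.ofReal_rpow_of_nonneg hc0.le (by positivity)
        _ = ENNReal.ofReal (c ^ m) := by rw [Real.rpow_natCast]
    rw [← ofReal_norm_eq_coe_nnnorm] at h1
    exact (ENNReal.ofReal_le_ofReal_iff (by positivity)).mp h1
  have hentry : |(N ^ m) i j| ≤ ‖a ^ m‖ := by
    have h2 : |(N ^ m) i j| = Complex.abs ((a ^ m) i j) := by
      rw [map_pow_comm, Matrix.map_apply, Complex.abs_ofReal]
    rw [h2]
    calc Complex.abs ((a ^ m) i j) ≤ ∑ l, Complex.abs ((a ^ m) i l) :=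
          Finset.single_le_sum (f := fun l => Complex.abs ((a ^ m) i l))
            (fun l _ => apply_nonneg _ _) (Finset.mem_univ j)
      _ ≤ ‖a ^ m‖ := row_sum_le_norm _ i
  exact hentry.trans hnorm

lemma det_one_sub_ne_zero (hn : 0 < n) (N : Matrix (Fin n) (Fin n) ℝ)
    (hρ : specRad N < 1) : ((1 : Matrix (Fin n) (Fin n) ℝ) - N).det ≠ 0 := by
  intro hdet
  have hdetC : ((1 : Matrix (Fin n) (Fin n) ℂ) - N.map Complex.ofReal).det = 0 := by
    have h1 : ((1 : Matrix (Fin n) (Fin n) ℝ) - N).map Complex.ofReal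
        = (1 : Matrix (Fin n) (Fin n) ℂ) - N.map Complex.ofReal := by
      ext i j; by_cases h : i = j <;> simp [h, Matrix.map_apply, Matrix.one_apply]
    rw [← h1]
    have := RingHom.map_det (Complex.ofRealHom) ((1 : Matrix (Fin n) (Fin n) ℝ) - N)
    rw [show (Complex.ofRealHom).mapMatrix ((1 : Matrix (Fin n) (Fin n) ℝ) - N)
      = ((1 : Matrix (Fin n) (Fin n) ℝ) - N).map Complex.ofReal from rfl] at this
    rw [← this, hdet]
    simp
  obtain ⟨x, hx0, hxe⟩ := Matrix.exists_mulVec_eq_zero_iff.mpr hdetC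
  have hxe' : (N.map Complex.ofReal) *ᵥ x = (1 : ℂ) • x := by
    have h2 : x - (N.map Complex.ofReal) *ᵥ x = 0 := by
      rw [← hxe, Matrix.sub_mulVec, Matrix.one_mulVec]
    simpa [sub_eq_zero] using (sub_eq_zero.mp h2).symm
  obtain ⟨-, -, -, hmax⟩ := specRad_spec hn N
  have := hmax 1 ((isRoot_charpoly_iff _ _).mpr ⟨x, hx0, hxe'⟩)
  simp at this
  linarith

lemma inv_entries_nonneg (hn : 0 < n) (N : Matrix (Fin n) (Fin n) ℝ) (hN : ∀ i j, 0 ≤ N i j)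
    (hρ : specRad N < 1) : ∀ i j, 0 ≤ ((1 : Matrix (Fin n) (Fin n) ℝ) - N)⁻¹ i j := by
  intro i j
  set Q := ((1 : Matrix (Fin n) (Fin n) ℝ) - N)⁻¹ with hQ
  have hdet : IsUnit ((1 : Matrix (Fin n) (Fin n) ℝ) - N).det :=
    isUnit_iff_ne_zero.mpr (det_one_sub_ne_zero hn N hρ)
  have hinv : ((1 : Matrix (Fin n) (Fin n) ℝ) - N) * Q = 1 := Matrix.mul_nonsing_inv _ hdet
  have hdecomp : ∀ m : ℕ, (∑ k ∈ Finset.range m, N ^ k) = Q - (N ^ m) * Q := by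
    intro m
    have h1 : (∑ k ∈ Finset.range m, N ^ k) * ((1 : Matrix (Fin n) (Fin n) ℝ) - N)
        = 1 - N ^ m := by
      have := geom_sum_mul N m
      calc (∑ k ∈ Finset.range m, N ^ k) * ((1 : Matrix (Fin n) (Fin n) ℝ) - N)
          = -((∑ k ∈ Finset.range m, N ^ k) * (N - 1)) := by
            simp only [mul_sub, mul_one, neg_sub]
        _ = -(N ^ m - 1) := by rw [this]
        _ = 1 - N ^ m := neg_sub _ _
    calc (∑ k ∈ Finset.range m, N ^ k)
        = (∑ k ∈ Finset.range m, N ^ k) * (((1 : Matrix (Fin n) (Fin n) ℝ) - N) * Q) := by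
          rw [hinv, mul_one]
      _ = ((∑ k ∈ Finset.range m, N ^ k) * ((1 : Matrix (Fin n) (Fin n) ℝ) - N)) * Q := by
          rw [mul_assoc]
      _ = (1 - N ^ m) * Q := by rw [h1]
      _ = Q - (N ^ m) * Q := by rw [sub_mul, one_mul]
  obtain ⟨c, hc0, hc1, hev⟩ := pow_entries_small hn N hρ
  set K := ∑ l, |Q l j| with hK
  have hKnn : 0 ≤ K := Finset.sum_nonneg fun l _ => abs_nonneg _
  have hlb : ∀ᶠ m : ℕ in atTop, -(c ^ m * K) ≤ Q i j := by
    filter_upwards [hev] with m hm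
    have hS : 0 ≤ (∑ k ∈ Finset.range m, N ^ k) i j := by
      rw [Matrix.sum_apply]
      exact Finset.sum_nonneg fun k _ => pow_entries_nonneg N hN k i j
    have herr : |((N ^ m) * Q) i j| ≤ c ^ m * K := by
      rw [Matrix.mul_apply]
      calc |∑ l, (N ^ m) i l * Q l j| ≤ ∑ l, |(N ^ m) i l * Q l j| :=
            Finset.abs_sum_le_sum_abs _ _
        _ ≤ ∑ l, c ^ m * |Q l j| := Finset.sum_le_sum fun l _ => by
            rw [abs_mul]
            exact mul_le_mul_of_nonneg_right (hm i l) (abs_nonneg _)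
        _ = c ^ m * K := by rw [hK, Finset.mul_sum]
    have hdec := hdecomp m
    have : Q i j = (∑ k ∈ Finset.range m, N ^ k) i j + ((N ^ m) * Q) i j := by
      have := congrArg (fun X => X i j) hdec
      simp only [Matrix.sub_apply] at this
      linarith [this]
    rw [this]
    have := abs_le.mp herr
    linarith
  have hlim : Tendsto (fun m : ℕ => -(c ^ m * K)) atTop (nhds 0) := by
    have := (tendsto_pow_atTop_nhds_zero_of_lt_one hc0 hc1).mul_const K
    simpa using this.neg
  exact le_of_tendsto hlim hlb

end Gelfand

lemma pow_mulVec_eigen (C : Matrix (Fin n) (Fin n) ℝ) (u : Fin n → ℝ) (ρ : ℝ)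
    (h : C *ᵥ u = ρ • u) (m : ℕ) : (C ^ m) *ᵥ u = ρ ^ m • u := by
  induction m with
  | zero => simp [Matrix.one_mulVec]
  | succ m ih =>
    rw [pow_succ', ← Matrix.mulVec_mulVec, ih, Matrix.mulVec_smul, h, smul_smul, pow_succ']
    rw [mul_comm]

lemma perron (hn : 0 < n) (C : Matrix (Fin n) (Fin n) ℝ) (hC : ∀ i j, 0 ≤ C i j)
    (hprim : ∃ k, ∀ i j, 0 < (C ^ k) i j) (hrow : ∀ i, ∃ j, 0 < C i j) :
    ∃ v : Fin n → ℝ, (∀ i, 0 < v i) ∧ C *ᵥ v = specRad C • v ∧ 0 < specRad C := by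
  set ρ := specRad C with hρdef
  have hρ0 : 0 ≤ ρ := specRad_nonneg hn C
  obtain ⟨z, hzr, hzs, -⟩ := specRad_spec hn C
  obtain ⟨x, hx0, hxe⟩ := (isRoot_charpoly_iff _ z).mp hzr
  set u := fun i => Complex.abs (x i) with hu
  have hunn : ∀ i, 0 ≤ u i := fun i => apply_nonneg _ _
  obtain ⟨j0, hj0⟩ := Function.ne_iff.mp hx0
  have huj0 : 0 < u j0 := by simpa [hu, AbsoluteValue.pos_iff] using hj0
  have hsub : ∀ i, ρ * u i ≤ (C *ᵥ u) i := by
    intro i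
    have he : z * x i = ∑ j, (C i j : ℂ) * x j := by
      rw [← mapC_mulVec_apply, hxe]; simp
    calc ρ * u i = Complex.abs (z * x i) := by
          rw [_root_.map_mul, hρdef, ← hzs, hu]
      _ = Complex.abs (∑ j, (C i j : ℂ) * x j) := by rw [he]
      _ ≤ ∑ j, Complex.abs ((C i j : ℂ) * x j) := Complex.abs.sum_le _ _
      _ = ∑ j, C i j * u j := Finset.sum_congr rfl fun j _ => by
          rw [_root_.map_mul, Complex.abs_ofReal, abs_of_nonneg (hC i j)]
      _ = (C *ᵥ u) i := by simp [Matrix.mulVec, dotProduct]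
  obtain ⟨k, hk⟩ := hprim
  set P := C ^ k with hP
  set w := P *ᵥ u with hw
  have hwpos : ∀ i, 0 < w i := by
    intro i
    rw [hw]
    simp only [Matrix.mulVec, dotProduct]
    exact Finset.sum_pos' (fun j _ => mul_nonneg (hk i j).le (hunn j))
      ⟨j0, Finset.mem_univ _, mul_pos (hk i j0) huj0⟩
  by_cases hcase : ∀ i, (C *ᵥ u) i = ρ * u i
  · have heig : C *ᵥ u = ρ • u := funext fun i => by rw [hcase i]; rfl
    have hpow := pow_mulVec_eigen C u ρ heig k
    have hupos : ∀ i, 0 < u i := by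
      intro i
      have h1 : 0 < (P *ᵥ u) i := hwpos i
      rw [hP, hpow] at h1
      simp only [Pi.smul_apply, smul_eq_mul] at h1
      by_contra hcon
      push_neg at hcon
      have : u i = 0 := le_antisymm hcon (hunn i)
      rw [this, mul_zero] at h1
      exact lt_irrefl _ h1
    have hρpos : 0 < ρ := by
      set i : Fin n := ⟨0, hn⟩
      obtain ⟨j, hj⟩ := hrow i
      have h1 : ρ * u i = (C *ᵥ u) i := (hcase i).symm
      have h2 : C i j * u j ≤ (C *ᵥ u) i := by
        simp only [Matrix.mulVec, dotProduct]
        exact Finset.single_le_sum (f := fun j => C i j * u j)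
          (fun l _ => mul_nonneg (hC i l) (hunn l)) (Finset.mem_univ j)
      have h3 : 0 < C i j * u j := mul_pos hj (hupos j)
      nlinarith [hupos i]
    exact ⟨u, hupos, heig, hρpos⟩
  · exfalso
    push_neg at hcase
    obtain ⟨i0, hi0⟩ := hcase
    have hd : ∀ j, 0 ≤ (C *ᵥ u) j - ρ * u j := fun j => sub_nonneg.mpr (hsub j)
    have hd0 : 0 < (C *ᵥ u) i0 - ρ * u i0 :=
      lt_of_le_of_ne (hd i0) (fun h => hi0 (by linarith))
    have hCP : C * P = P * C := by
      rw [hP, ← pow_succ, ← pow_succ']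
    have hkey : ∀ i, ρ * w i < (C *ᵥ w) i := by
      intro i
      have h1 : C *ᵥ w = P *ᵥ (C *ᵥ u) := by
        rw [hw, Matrix.mulVec_mulVec, hCP, ← Matrix.mulVec_mulVec]
      have h2 : (C *ᵥ w) i - ρ * w i = ∑ j, P i j * ((C *ᵥ u) j - ρ * u j) := by
        rw [h1, hw]
        simp only [Matrix.mulVec, dotProduct, mul_sub, Finset.sum_sub_distrib,
          Finset.mul_sum]
        congr 1
        exact Finset.sum_congr rfl fun j _ => by ring
      have h3 : 0 < ∑ j, P i j * ((C *ᵥ u) j - ρ * u j) :=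
        Finset.sum_pos' (fun j _ => mul_nonneg (hk i j).le (hd j))
          ⟨i0, Finset.mem_univ _, mul_pos (hk i i0) hd0⟩
      linarith [h2, h3]
    set r' := Finset.univ.inf' ⟨⟨0, hn⟩, Finset.mem_univ _⟩ (fun i => (C *ᵥ w) i / w i) with hr'
    have hρr' : ρ < r' := by
      rw [hr']
      refine (Finset.lt_inf'_iff _).mpr ?_
      intro i _
      rw [lt_div_iff₀ (hwpos i)]
      exact hkey i
    have hbound : ∀ i, r' * w i ≤ (C *ᵥ w) i := by
      intro i
      have := Finset.inf'_le (fun i => (C *ᵥ w) i / w i) (Finset.mem_univ i)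
      rw [← hr'] at this
      calc r' * w i ≤ ((C *ᵥ w) i / w i) * w i :=
            mul_le_mul_of_nonneg_right this (hwpos i).le
        _ = (C *ᵥ w) i := div_mul_cancel₀ _ (hwpos i).ne'
    have hle := lowerCW hn C hC w hwpos r' (hρ0.trans hρr'.le) hbound
    rw [← hρdef] at hle
    linarith


theorem stmt11 {n : ℕ} (A : Matrix (Fin n) (Fin n) ℝ) (hA : ∀ i j, 0 ≤ A i j)
    (hdiag : ∀ i, A i i = 0) (μ η : Fin n → ℝ) (hμ : ∀ i, 0 ≤ μ i) (hη : ∀ i, 0 < η i)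
    (pbar : ℝ) (hp : 0 < pbar) (Ω : Finset (Fin n)) (hΩ : Ω.Nonempty)
    (B C : Matrix (Fin n) (Fin n) ℝ) (hB : B = Matrix.diagonal μ * A) (hBprim : Primitive B)
    (hC : C = psi B (fun i => η i / pbar) Ω) (hCprim : Primitive C)
    (hlt : specRad B < specRad C) :
    (∀ γ : ℝ, 1 / specRad C < γ → γ < 1 / specRad B →
        pbar < ∑ i ∈ Ω, (γ • (((1 : Matrix (Fin n) (Fin n) ℝ) - γ • B)⁻¹ *ᵥ η)) i)
      ∧ IsGreatest {γ : ℝ | 0 < γ ∧ ∃ p : Fin n → ℝ,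
          ((1 : Matrix (Fin n) (Fin n) ℝ) - γ • B) *ᵥ p = γ • η
            ∧ (∀ i, 0 ≤ p i) ∧ ∑ i ∈ Ω, p i ≤ pbar}
        (1 / specRad C) := by
  have hn : 0 < n := (hΩ.choose : Fin n).pos
  have hBnn : ∀ i j, 0 ≤ B i j := by
    intro i j
    rw [hB, Matrix.diagonal_mul]
    exact mul_nonneg (hμ i) (hA i j)
  have hCnn : ∀ i j, 0 ≤ C i j := by
    intro i j
    rw [hC]
    unfold psi
    split
    · exact add_nonneg (hBnn i j) (div_nonneg (hη i).le hp.le)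
    · exact hBnn i j
  have hrowC : ∀ i, ∃ j, 0 < C i j := by
    intro i
    refine ⟨hΩ.choose, ?_⟩
    rw [hC]
    unfold psi
    rw [if_pos hΩ.choose_spec]
    exact add_pos_of_nonneg_of_pos (hBnn i _) (div_pos (hη i) hp)
  obtain ⟨v, hv, heig, hρC⟩ := perron hn C hCnn hCprim hrowC
  set ρC := specRad C with hρCdef
  set ρB := specRad B with hρBdef
  have hρB0 : 0 ≤ ρB := specRad_nonneg hn B
  set s := ∑ i ∈ Ω, v i with hs
  have hspos : 0 < s := Finset.sum_pos (fun i _ => hv i) hΩ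
  -- structure of C *ᵥ q
  have hCq : ∀ (q : Fin n → ℝ) (i : Fin n),
      (C *ᵥ q) i = (B *ᵥ q) i + (η i / pbar) * ∑ j ∈ Ω, q j := by
    intro q i
    rw [hC]
    simp only [Matrix.mulVec, dotProduct, psi]
    have hterm : ∀ j, (if j ∈ Ω then B i j + η i / pbar else B i j) * q j
        = B i j * q j + (if j ∈ Ω then (η i / pbar) * q j else 0) := by
      intro j; split <;> ring
    simp_rw [hterm]
    rw [Finset.sum_add_distrib, Finset.sum_ite_mem, Finset.univ_inter, Finset.mul_sum]
  -- the upper bound: every feasible γ satisfies γ ≤ 1/ρC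
  have hub : ∀ γ ∈ {γ : ℝ | 0 < γ ∧ ∃ p : Fin n → ℝ,
      ((1 : Matrix (Fin n) (Fin n) ℝ) - γ • B) *ᵥ p = γ • η
        ∧ (∀ i, 0 ≤ p i) ∧ ∑ i ∈ Ω, p i ≤ pbar}, γ ≤ 1 / ρC := by
    rintro γ ⟨hγ0, p, heqp, hpnn, hsump⟩
    have hcomp : ∀ i, p i - γ * (B *ᵥ p) i = γ * η i := by
      intro i
      have := congrFun heqp i
      simpa [Matrix.sub_mulVec, Matrix.one_mulVec, Matrix.smul_mulVec] using this
    have hBpnn : ∀ i, 0 ≤ (B *ᵥ p) i := by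
      intro i
      simp only [Matrix.mulVec, dotProduct]
      exact Finset.sum_nonneg fun j _ => mul_nonneg (hBnn i j) (hpnn j)
    have hppos : ∀ i, 0 < p i := by
      intro i
      have h1 := hcomp i
      nlinarith [hBpnn i, hη i, hpnn i]
    have hCle : ∀ i, (C *ᵥ p) i ≤ (1 / γ) * p i := by
      intro i
      rw [hCq p i]
      have h1 : (η i / pbar) * ∑ j ∈ Ω, p j ≤ η i := by
        calc (η i / pbar) * ∑ j ∈ Ω, p j ≤ (η i / pbar) * pbar :=
              mul_le_mul_of_nonneg_left hsump (div_nonneg (hη i).le hp.le)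
          _ = η i := div_mul_cancel₀ _ hp.ne'
      have h2 := hcomp i
      have h3 : (B *ᵥ p) i + η i = p i / γ := by
        field_simp
        linarith
      calc (B *ᵥ p) i + (η i / pbar) * ∑ j ∈ Ω, p j ≤ (B *ᵥ p) i + η i := by linarith
        _ = p i / γ := h3
        _ = (1 / γ) * p i := by ring
    have hCW := upperCW hn C hCnn p hppos (1 / γ) hCle
    rw [← hρCdef] at hCW
    rw [le_div_iff₀ hρC]
    calc γ * ρC ≤ γ * (1 / γ) := mul_le_mul_of_nonneg_left hCW hγ0.le
      _ = 1 := by field_simp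
  -- membership : 1/ρC is feasible
  have hmem : (1 / ρC) ∈ {γ : ℝ | 0 < γ ∧ ∃ p : Fin n → ℝ,
      ((1 : Matrix (Fin n) (Fin n) ℝ) - γ • B) *ᵥ p = γ • η
        ∧ (∀ i, 0 ≤ p i) ∧ ∑ i ∈ Ω, p i ≤ pbar} := by
    refine ⟨by positivity, (pbar / s) • v, ?_, ?_, ?_⟩
    · funext i
      have h1 : (C *ᵥ v) i = ρC * v i := by rw [heig]; rfl
      have h2 := hCq v i
      rw [h1, ← hs] at h2
      have h3 : (B *ᵥ v) i = ρC * v i - (η i / pbar) * s := by linarith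
      have h4 : ((((1 : Matrix (Fin n) (Fin n) ℝ) - (1 / ρC) • B)) *ᵥ ((pbar / s) • v)) i
          = (pbar / s) * v i - (1 / ρC) * ((pbar / s) * (B *ᵥ v) i) := by
        simp [Matrix.sub_mulVec, Matrix.one_mulVec, Matrix.smul_mulVec,
          Matrix.mulVec_smul, mul_comm]
        ring
      rw [h4, h3]
      simp only [Pi.smul_apply, smul_eq_mul]
      field_simp
      ring
    · intro i
      simp only [Pi.smul_apply, smul_eq_mul]
      exact mul_nonneg (div_nonneg hp.le hspos.le) (hv i).le
    · have : ∑ i ∈ Ω, ((pbar / s) • v) i = (pbar / s) * s := by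
        simp only [Pi.smul_apply, smul_eq_mul]
        rw [← Finset.mul_sum, ← hs]
      rw [this, div_mul_cancel₀ _ hspos.ne']
  refine ⟨?_, hmem, hub⟩
  -- part 1
  intro γ hγ1 hγ2
  have hγ0 : 0 < γ := lt_trans (by positivity) hγ1
  have hρBpos : 0 < ρB := by
    rcases lt_or_eq_of_le hρB0 with h | h
    · exact h
    · exfalso
      rw [← h, div_zero] at hγ2
      linarith
  have hγB : γ * ρB < 1 := by
    rw [lt_div_iff₀ hρBpos] at hγ2
    exact hγ2
  have hNspec : specRad (γ • B) < 1 :=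
    lt_of_le_of_lt (specRad_smul_le hn B γ hγ0) (by rw [← hρBdef]; linarith)
  have hNnn : ∀ i j, 0 ≤ (γ • B) i j := by
    intro i j
    simp only [Matrix.smul_apply, smul_eq_mul]
    exact mul_nonneg hγ0.le (hBnn i j)
  have hdet := det_one_sub_ne_zero hn (γ • B) hNspec
  have hQnn := inv_entries_nonneg hn (γ • B) hNnn hNspec
  set Q := ((1 : Matrix (Fin n) (Fin n) ℝ) - γ • B)⁻¹ with hQdef
  set p := γ • (Q *ᵥ η) with hpdef
  have heqp : ((1 : Matrix (Fin n) (Fin n) ℝ) - γ • B) *ᵥ p = γ • η := by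
    rw [hpdef, Matrix.mulVec_smul, Matrix.mulVec_mulVec,
      Matrix.mul_nonsing_inv _ (isUnit_iff_ne_zero.mpr hdet), Matrix.one_mulVec]
  have hpnn : ∀ i, 0 ≤ p i := by
    intro i
    rw [hpdef]
    simp only [Pi.smul_apply, smul_eq_mul, Matrix.mulVec, dotProduct]
    exact mul_nonneg hγ0.le (Finset.sum_nonneg fun j _ => mul_nonneg (hQnn i j) (hη j).le)
  by_contra hcon
  push_neg at hcon
  have hfeas : γ ∈ {γ : ℝ | 0 < γ ∧ ∃ p : Fin n → ℝ,
      ((1 : Matrix (Fin n) (Fin n) ℝ) - γ • B) *ᵥ p = γ • η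
        ∧ (∀ i, 0 ≤ p i) ∧ ∑ i ∈ Ω, p i ≤ pbar} :=
    ⟨hγ0, p, heqp, hpnn, hcon⟩
  have := hub γ hfeas
  linarith
end
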